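/- arXiv:2006.06315 — 7 statements merged into one kernel-verified Lean document; each statement's English description precedes it below -/
import Mathlib

section
/- The vector f ∈ ℝ^m defined by f^s = Q_s / (Σ_{s'=1}^m Q_{s'}) for 1 ≤ s ≤ m is a stationary distribution of the exogenous innovation–imitation model: every entry of f is nonnegative, Σ_{s=1}^m f^s = 1, and A f = f. -/
/-- The transition matrix of the exogenous innovation–imitation model
(0-indexed: level `i : Fin m` corresponds to productivity level `i+1`).
`A_{1,1} = a + q_1(1-a)`, `A_{i,1} = q_i(1-a)` for `i ≥ 2`, `A_{i,i} = a`
for `i ≥ 2`, `A_{i,i+1} = 1-a`, all other entries `0`. -/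
def transMatrix (m : ℕ) (a : ℝ) (q : Fin m → ℝ) : Matrix (Fin m) (Fin m) ℝ :=
  fun i j =>
    (if (j : ℕ) = 0 then q i * (1 - a) else 0) +
    (if i = j then a else 0) +
    (if (j : ℕ) = (i : ℕ) + 1 then 1 - a else 0)

/-- `Q_s = q_s + q_{s+1} + ⋯ + q_m` (0-indexed). -/
def tailQ (m : ℕ) (q : Fin m → ℝ) (s : Fin m) : ℝ := ∑ j ∈ Finset.Ici s, q j

/-- A stationary distribution of the exogenous innovation–imitation model:
nonnegative entries summing to `1` with `A f = f`. -/
def IsStationaryDistrib (m : ℕ) (a : ℝ) (q : Fin m → ℝ) (f : Fin m → ℝ) : Prop :=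
  (∀ i, 0 ≤ f i) ∧ (∑ i, f i = 1) ∧ (transMatrix m a q).mulVec f = f

/-!
The tail sums `Q` are a fixed vector of `A`: row `i` of `A Q` is
`q_i (1 - a) Q_1 + a Q_i + (1 - a) Q_{i+1}`, and `Q_1 = 1`, `Q_{i+1} = Q_i - q_i` (with `Q_{m+1} = 0`)
turn this into `Q_i`. Since `Q ≥ 0` and `Q_1 = 1`, normalizing `Q` gives a stationary distribution.
-/

open Finset Matrix

section

variable {m : ℕ}

lemma transMatrix_mulVec_apply (a : ℝ) (q v : Fin m → ℝ) (i : Fin m) :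
    (transMatrix m a q *ᵥ v) i =
      q i * (1 - a) * ∑ j : Fin m with j.val = 0, v j + a * v i +
        (1 - a) * ∑ j : Fin m with j.val = i.val + 1, v j := by
  simp only [transMatrix, mulVec, dotProduct, add_mul, ite_mul, zero_mul, sum_add_distrib,
    sum_ite, sum_const_zero, add_zero, mul_sum, mul_assoc, filter_eq, mem_univ, if_true,
    sum_singleton]

variable (q : Fin m → ℝ)

lemma tailQ_nonneg (hq : ∀ i, 0 ≤ q i) (s : Fin m) : 0 ≤ tailQ m q s :=
  sum_nonneg fun j _ => hq j

lemma sum_filter_val_eq_zero_tailQ : ∑ j : Fin m with j.val = 0, tailQ m q j = ∑ j, q j := by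
  cases m with
  | zero => simp
  | succ n =>
    simp only [Fin.val_eq_zero_iff, filter_eq', mem_univ, ↓reduceIte, tailQ, sum_singleton,
      Ici_zero_eq_univ]

lemma sum_filter_val_eq_succ_tailQ (i : Fin m) :
    ∑ j : Fin m with j.val = i.val + 1, tailQ m q j = tailQ m q i - q i := by
  rw [tailQ, ← add_sum_Ioi_eq_sum_Ici, add_sub_cancel_left]
  by_cases h : (i : ℕ) + 1 < m
  · have hfilter : ({j | j.val = i.val + 1} : Finset (Fin m)) = {⟨i + 1, h⟩} := by
      ext j; simp [Fin.ext_iff]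
    have hIoi : Ioi i = Ici ⟨i + 1, h⟩ := by
      ext j; simp only [mem_Ioi, mem_Ici, Fin.lt_def, Fin.le_def]; omega
    rw [hfilter, sum_singleton, hIoi, tailQ]
  · have hfilter : ({j | j.val = i.val + 1} : Finset (Fin m)) = ∅ := by
      ext j; simp only [mem_filter, mem_univ, true_and, notMem_empty, iff_false]; omega
    have hIoi : Ioi i = ∅ := by
      ext j; simp only [mem_Ioi, Fin.lt_def, notMem_empty, iff_false]; omega
    rw [hfilter, hIoi, sum_empty, sum_empty]

theorem transMatrix_mulVec_tailQ (a : ℝ) (hq : ∑ i, q i = 1) :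
    transMatrix m a q *ᵥ tailQ m q = tailQ m q := by
  ext i
  rw [transMatrix_mulVec_apply, sum_filter_val_eq_zero_tailQ, sum_filter_val_eq_succ_tailQ, hq]
  ring

lemma one_le_sum_tailQ (hm : 1 ≤ m) (hq : ∀ i, 0 ≤ q i) (hqsum : ∑ i, q i = 1) :
    1 ≤ ∑ s, tailQ m q s := by
  have : NeZero m := ⟨by omega⟩
  have htop : tailQ m q 0 = 1 := by rw [tailQ, Ici_zero_eq_univ, hqsum]
  exact htop ▸ single_le_sum (fun s _ => tailQ_nonneg q hq s) (mem_univ 0)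

end

theorem isStationaryDistrib_div_sum {m : ℕ} {a : ℝ} {q v : Fin m → ℝ} (hv : ∀ i, 0 ≤ v i)
    (hsum : ∑ i, v i ≠ 0) (hfix : transMatrix m a q *ᵥ v = v) :
    IsStationaryDistrib m a q (fun s => v s / ∑ s', v s') := by
  refine ⟨fun i => div_nonneg (hv i) (sum_nonneg fun j _ => hv j), ?_, ?_⟩
  · rw [← sum_div, div_self hsum]
  · have hscale : (fun s => v s / ∑ s', v s') = (∑ s', v s')⁻¹ • v := by
      ext s; simp [div_eq_inv_mul]
    rw [hscale, mulVec_smul, hfix]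

theorem stmt0_general (m : ℕ) (hm : 1 ≤ m) (a : ℝ)
    (q : Fin m → ℝ) (hq : ∀ i, q i ∈ Set.Icc (0 : ℝ) 1) (hqsum : ∑ i, q i = 1) :
    IsStationaryDistrib m a q (fun s => tailQ m q s / ∑ s', tailQ m q s') := by
  have hq0 : ∀ i, 0 ≤ q i := fun i => (hq i).1
  exact isStationaryDistrib_div_sum (tailQ_nonneg q hq0)
    (one_pos.trans_le (one_le_sum_tailQ q hm hq0 hqsum)).ne' (transMatrix_mulVec_tailQ q a hqsum)

theorem stmt0 (m : ℕ) (hm : 1 ≤ m) (a : ℝ) (ha : a ∈ Set.Ioo (0 : ℝ) 1)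
    (q : Fin m → ℝ) (hq : ∀ i, q i ∈ Set.Icc (0 : ℝ) 1) (hqsum : ∑ i, q i = 1) :
    IsStationaryDistrib m a q (fun s => tailQ m q s / ∑ s', tailQ m q s') :=
  stmt0_general m hm a q hq hqsum
end

section
/- Every stationary distribution f of the exogenous innovation–imitation model satisfies f^s = Q_s · f^1 for all 1 ≤ s ≤ m, and consequently f^1 = (Σ_{s=1}^m Q_s)^{-1}. -/
/-- A stationary distribution of the exogenous innovation–imitation model. -/
def IsStationaryInnovImit (m : ℕ) (a : ℝ) (q : Fin m → ℝ) (f : Fin m → ℝ) : Prop :=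
  (∀ i, 0 ≤ f i) ∧ (∑ i, f i = 1) ∧ (transMatrix m a q).mulVec f = f


/-!
Row `i` of `A f = f` reads `(1 - a) f^i = (1 - a) (q_i f^1 + f^{i+1})` (with `f^{m+1} = 0`), so for
`a ≠ 1` the differences `f^i - f^{i+1} = q_i f^1` telescope from the top level down to
`f^s = Q_s f^1`; summing over `s` and using `∑ f^s = 1` gives `f^1`.
-/

open Finset Matrix

theorem Fin.sum_ite_val_eq {M : Type*} [AddCommMonoid M] {m : ℕ} (k : ℕ) (g : Fin m → M) :
    (∑ j : Fin m, if (j : ℕ) = k then g j else 0) = if hk : k < m then g ⟨k, hk⟩ else 0 := by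
  split_ifs with hk
  · simp_rw [← Fin.ext_iff (b := ⟨k, hk⟩), Fintype.sum_ite_eq']
  · exact sum_eq_zero fun j _ => if_neg fun (hj : (j : ℕ) = k) => hk (hj ▸ j.isLt)

theorem Fin.sum_Ici_castSucc {M : Type*} [AddCommMonoid M] {n : ℕ} (g : Fin (n + 1) → M)
    (i : Fin n) : ∑ j ∈ Ici i.castSucc, g j = g i.castSucc + ∑ j ∈ Ici i.succ, g j := by
  rw [← add_sum_Ioi_eq_sum_Ici]
  congr 2
  ext j
  simp [Fin.lt_def, Fin.le_def]

theorem eq_sum_Ici_of_eq_add_next {M : Type*} [AddCommMonoid M] {m : ℕ} {g r : Fin m → M}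
    (h : ∀ i : Fin m, g i = r i + if hi : (i : ℕ) + 1 < m then g ⟨i + 1, hi⟩ else 0)
    (i : Fin m) : g i = ∑ j ∈ Ici i, r j := by
  obtain _ | n := m
  · exact i.elim0
  induction i using Fin.reverseInduction with
  | last => simpa [← Fin.top_eq_last, Ici_top] using h ⊤
  | cast i ih =>
    rw [h, Fin.sum_Ici_castSucc, dif_pos (by simp), ← ih]
    rfl

theorem transMatrix_mulVec_apply_s1 (m : ℕ) (hm : 0 < m) (a : ℝ) (q f : Fin m → ℝ) (i : Fin m) :
    (transMatrix m a q *ᵥ f) i = q i * (1 - a) * f ⟨0, hm⟩ + a * f i +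
      (1 - a) * if hi : (i : ℕ) + 1 < m then f ⟨i + 1, hi⟩ else 0 := by
  simp only [transMatrix, mulVec, dotProduct, add_mul, sum_add_distrib, ite_mul, zero_mul,
    Fin.sum_ite_val_eq, dif_pos hm, Fintype.sum_ite_eq, mul_dite, mul_zero]

theorem eq_add_next_of_transMatrix_mulVec_eq_self {m : ℕ} (hm : 0 < m) {a : ℝ} (ha : a ≠ 1)
    {q f : Fin m → ℝ} (hf : transMatrix m a q *ᵥ f = f) (i : Fin m) :
    f i = q i * f ⟨0, hm⟩ + if hi : (i : ℕ) + 1 < m then f ⟨i + 1, hi⟩ else 0 := by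
  have hrow := congrFun hf i
  rw [transMatrix_mulVec_apply_s1 m hm] at hrow
  refine mul_left_cancel₀ (sub_ne_zero.2 ha.symm) ?_
  linear_combination -hrow

theorem stmt1_general (m : ℕ) (hm : 1 ≤ m) (a : ℝ) (ha : a ∈ Set.Ioo (0 : ℝ) 1)
    (q : Fin m → ℝ) (f : Fin m → ℝ) (hf : IsStationaryInnovImit m a q f) :
    (∀ s, f s = tailQ m q s * f ⟨0, hm⟩) ∧
      f ⟨0, hm⟩ = (∑ s, tailQ m q s)⁻¹ := by
  obtain ⟨-, hsum, hstat⟩ := hf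
  have hlevel (s : Fin m) : f s = tailQ m q s * f ⟨0, hm⟩ := by
    rw [tailQ, sum_mul]
    exact eq_sum_Ici_of_eq_add_next (r := fun j => q j * f ⟨0, hm⟩)
      (eq_add_next_of_transMatrix_mulVec_eq_self hm ha.2.ne hstat) s
  refine ⟨hlevel, eq_inv_of_mul_eq_one_right ?_⟩
  rw [sum_mul, ← hsum]
  exact sum_congr rfl fun s _ => (hlevel s).symm

theorem stmt1 (m : ℕ) (hm : 1 ≤ m) (a : ℝ) (ha : a ∈ Set.Ioo (0 : ℝ) 1)
    (q : Fin m → ℝ) (hq : ∀ i, q i ∈ Set.Icc (0 : ℝ) 1) (hqsum : ∑ i, q i = 1)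
    (f : Fin m → ℝ) (hf : IsStationaryInnovImit m a q f) :
    (∀ s, f s = tailQ m q s * f ⟨0, hm⟩) ∧
      f ⟨0, hm⟩ = (∑ s, tailQ m q s)⁻¹ :=
  stmt1_general m hm a ha q f hf
end

section
/- Suppose q_m = 1 (and hence q_i = 0 for all i < m), the case of pure leapfrogging without imitation. Then the uniform vector f with f^i = 1/m for all 1 ≤ i ≤ m is a stationary distribution, and every stationary distribution of the exogenous innovation–imitation model equals this uniform vector. -/
open Matrix Finset

theorem Finset.eq_single_of_sum_eq_of_nonneg {ι M : Type*} [Fintype ι] [DecidableEq ι]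
    [AddCommMonoid M] [PartialOrder M] [IsOrderedCancelAddMonoid M] {q : ι → M}
    (hq : ∀ i, 0 ≤ q i) {k : ι} (hsum : ∑ i, q i = q k) : q = Pi.single k (q k) := by
  have hrest : ∑ i ∈ univ.erase k, q i = 0 := by
    rw [← add_sum_erase univ q (mem_univ k)] at hsum
    exact add_eq_left.mp hsum
  funext i
  rcases eq_or_ne i k with rfl | hi
  · simp
  · rw [Pi.single_eq_of_ne hi]
    exact (sum_eq_zero_iff_of_nonneg fun j _ => hq j).mp hrest i (mem_erase.mpr ⟨hi, mem_univ i⟩)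

section
variable {n : ℕ} {a : ℝ} {q : Fin (n + 1) → ℝ}

theorem transMatrix_mulVec_castSucc (f : Fin (n + 1) → ℝ) (i : Fin n) :
    (transMatrix (n + 1) a q *ᵥ f) i.castSucc =
      q i.castSucc * (1 - a) * f 0 + a * f i.castSucc + (1 - a) * f i.succ := by
  have h0 : ∀ j : Fin (n + 1), ((j : ℕ) = 0 ↔ j = 0) := fun j => Fin.val_eq_zero_iff
  have h1 : ∀ j : Fin (n + 1), ((j : ℕ) = i + 1 ↔ j = i.succ) := fun j => by
    simp [Fin.ext_iff]
  simp [transMatrix, mulVec, dotProduct, add_mul, sum_add_distrib, h0, h1]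

theorem transMatrix_mulVec_last (f : Fin (n + 1) → ℝ) :
    (transMatrix (n + 1) a q *ᵥ f) (Fin.last n) =
      q (Fin.last n) * (1 - a) * f 0 + a * f (Fin.last n) := by
  have h0 : ∀ j : Fin (n + 1), ((j : ℕ) = 0 ↔ j = 0) := fun j => Fin.val_eq_zero_iff
  have h1 : ∀ j : Fin (n + 1), (j : ℕ) ≠ n + 1 := fun j => j.isLt.ne
  simp [transMatrix, mulVec, dotProduct, add_mul, sum_add_distrib, h0, h1]

theorem transMatrix_mulVec_eq_self_iff (ha : a ≠ 1) (hq : q = Pi.single (Fin.last n) 1)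
    {f : Fin (n + 1) → ℝ} : transMatrix (n + 1) a q *ᵥ f = f ↔ ∀ i, f i = f 0 := by
  have ha' : 1 - a ≠ 0 := sub_ne_zero.mpr ha.symm
  have hlast : q (Fin.last n) = 1 := by simp [hq]
  have hinner : ∀ i : Fin n, q i.castSucc = 0 := fun i => by
    simp [hq, Fin.castSucc_ne_last]
  constructor
  · intro hf i
    induction i using Fin.induction with
    | zero => rfl
    | succ i ih =>
      have hrow := congrFun hf i.castSucc
      rw [transMatrix_mulVec_castSucc, hinner] at hrow
      have : (1 - a) * f i.succ = (1 - a) * f i.castSucc := by linarith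
      rw [mul_left_cancel₀ ha' this, ih]
  · intro hf
    funext i
    induction i using Fin.lastCases with
    | last =>
      rw [transMatrix_mulVec_last, hlast, hf (Fin.last n)]
      ring
    | cast i =>
      rw [transMatrix_mulVec_castSucc, hinner, hf i.castSucc, hf i.succ]
      ring
end

/-- Pure leapfrogging (`q_m = 1`): the uniform distribution is stationary,
and it is the unique stationary distribution. -/
theorem stmt3 (m : ℕ) (hm : 1 ≤ m) (a : ℝ) (ha : a ∈ Set.Ioo (0 : ℝ) 1)
    (q : Fin m → ℝ) (hq : ∀ i, q i ∈ Set.Icc (0 : ℝ) 1) (hqsum : ∑ i, q i = 1)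
    (hqm : q ⟨m - 1, by omega⟩ = 1) :
    IsStationaryInnovImit m a q (fun _ => 1 / (m : ℝ)) ∧
      ∀ f : Fin m → ℝ, IsStationaryInnovImit m a q f → f = fun _ => 1 / (m : ℝ) := by
  obtain ⟨n, rfl⟩ := Nat.exists_eq_add_of_le' hm
  replace hqm : q (Fin.last n) = 1 := hqm
  have hsingle : q = Pi.single (Fin.last n) 1 := by
    simpa [hqm] using
      Finset.eq_single_of_sum_eq_of_nonneg (fun i => (hq i).1) (hqsum.trans hqm.symm)
  have hstat (f : Fin (n + 1) → ℝ) := transMatrix_mulVec_eq_self_iff (f := f) ha.2.ne hsingle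
  refine ⟨⟨fun _ => by positivity, by simp [Nat.cast_add_one_ne_zero], (hstat _).2 fun _ => rfl⟩, ?_⟩
  rintro f ⟨-, hsum, hf⟩
  have hconst : f = fun _ => f 0 := funext ((hstat f).1 hf)
  rw [hconst] at hsum ⊢
  simp only [sum_const, card_univ, Fintype.card_fin, nsmul_eq_mul] at hsum
  exact funext fun _ => eq_one_div_of_mul_eq_one_right hsum
end

section
/- Suppose q_m ∈ (0,1). Define x_1 = (q_m^{−1/(m−1)} − 1)/(q_m^{−1/(m−1)} − q_m), μ = (1−q_m)/(1−x_1), and x_i = q_m x_1 (1 + μ x_1)^{m−i} for 1 ≤ i ≤ m. Then x = (x_1,…,x_m) is a stationary solution of the density-dependent model: all x_i ≥ 0, Σ_{i=1}^m x_i = 1, x_1 < 1, and the stationarity equations hold; moreover x_1 satisfies 1 = q_m (1 + (1−q_m)x_1/(1−x_1))^{m−1}. -/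
/-- A stationary solution of the density-dependent imitation model
(1-indexed: the vector is `x 1, …, x m`): nonnegative entries summing to `1`
with `x 1 < 1`, satisfying, with `μ = (1−q_m)/(1−x 1)`, the stationarity
equations `x m = a x m + (1−a) q_m x 1` and, for `1 ≤ i ≤ m−1`,
`x i = (1−a) x (i+1) + a x i + (1−a) μ x (i+1) x 1`. -/
def IsStationaryDD (m : ℕ) (a qm : ℝ) (x : ℕ → ℝ) : Prop :=
  (∀ i, 1 ≤ i → i ≤ m → 0 ≤ x i) ∧
  (∑ i ∈ Finset.Icc 1 m, x i = 1) ∧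
  x 1 < 1 ∧
  x m = a * x m + (1 - a) * qm * x 1 ∧
  ∀ i, 1 ≤ i → i ≤ m - 1 →
    x i = (1 - a) * x (i + 1) + a * x i +
      (1 - a) * ((1 - qm) / (1 - x 1)) * x (i + 1) * x 1

/-!
Put `r = q_m^{-1/(m-1)}`, so that `q_m r^{m-1} = 1` and `r > 1`. Then `x₁ = (r-1)/(r-q_m)`,
`μ = r - q_m` and `1 + μ x₁ = r`, so the candidate is the geometric vector
`x_i = q_m x₁ r^{m-i}`. Its first entry is `x₁`, its last is `q_m x₁`, and consecutive entries
have ratio `r = 1 + μ x₁`, which is exactly what the stationarity equations ask for; the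
geometric sum `q_m x₁ (r^m - 1)/(r - 1) = (q_m r^m - q_m)/(r - q_m)` equals `1` because
`q_m r^m = r`.
-/

open Finset

lemma Real.rpow_neg_one_div_natCast_pow {q : ℝ} (hq : 0 < q) {n : ℕ} (hn : n ≠ 0) :
    (q ^ (-1 / (n : ℝ))) ^ n = q⁻¹ := by
  rw [← Real.rpow_natCast, ← Real.rpow_mul hq.le, div_mul_cancel₀ _ (by exact_mod_cast hn),
    Real.rpow_neg_one]

lemma sum_Icc_pow_sub_eq_sum_range {R : Type*} [CommSemiring R] (r : R) (m : ℕ) :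
    ∑ i ∈ Icc 1 m, r ^ (m - i) = ∑ i ∈ range m, r ^ i := by
  rw [← sum_range_reflect, ← Ico_add_one_right_eq_Icc, sum_Ico_eq_sum_range]
  refine sum_congr (by simp) fun j _ => ?_
  congr 1
  omega

lemma isStationaryDD_geometric {m : ℕ} (a : ℝ) {q r s : ℝ} (hq : 0 ≤ q) (hr : 0 ≤ r)
    (hs : 0 ≤ s) (hs1 : s < 1) (hfirst : q * r ^ (m - 1) = 1)
    (hratio : 1 + (1 - q) / (1 - s) * s = r) (hsum : q * s * ∑ i ∈ range m, r ^ i = 1) :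
    IsStationaryDD m a q (fun i => q * s * r ^ (m - i)) := by
  have hx1 : q * s * r ^ (m - 1) = s := by linear_combination s * hfirst
  refine ⟨fun i _ _ => by positivity, ?_, ?_, ?_, fun i hi1 him => ?_⟩
  · rwa [← mul_sum, sum_Icc_pow_sub_eq_sum_range]
  · simpa only [hx1] using hs1
  · simp only [Nat.sub_self, pow_zero, mul_one, hx1]
    ring
  · simp only [hx1]
    rw [show m - i = m - (i + 1) + 1 by omega, pow_succ]
    linear_combination (1 - a) * q * s * r ^ (m - (i + 1)) * hratio.symm

section Parametrization

variable {q r : ℝ}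

lemma sub_one_div_sub_mem_Ico (hq1 : q < 1) (hr : 1 < r) :
    (r - 1) / (r - q) ∈ Set.Ico 0 1 :=
  ⟨div_nonneg (by linarith) (by linarith), (div_lt_one (by linarith)).2 (by linarith)⟩

lemma one_add_one_sub_div_one_sub_mul_sub_one_div_sub (hq1 : q < 1) (hr : 1 < r) :
    1 + (1 - q) / (1 - (r - 1) / (r - q)) * ((r - 1) / (r - q)) = r := by
  have hrq : r - q ≠ 0 := by linarith
  have hμ : (1 - q) / (1 - (r - 1) / (r - q)) = r - q := by
    rw [show 1 - (r - 1) / (r - q) = (1 - q) / (r - q) by field_simp; ring,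
      div_div_cancel₀ (by linarith)]
  rw [hμ, mul_div_cancel₀ _ hrq]
  ring

lemma mul_sub_one_div_sub_mul_geom_sum {m : ℕ} (hm : m ≠ 0) (hq1 : q < 1) (hr : 1 < r)
    (hfirst : q * r ^ (m - 1) = 1) : q * ((r - 1) / (r - q)) * ∑ i ∈ range m, r ^ i = 1 := by
  have hlast : q * r ^ m = r := by
    rw [← Nat.sub_add_cancel (Nat.one_le_iff_ne_zero.2 hm), pow_succ, ← mul_assoc, hfirst,
      one_mul]
  have : r - 1 ≠ 0 := by linarith
  have : r - q ≠ 0 := by linarith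
  rw [geom_sum_eq hr.ne']
  field_simp
  linear_combination hlast

end Parametrization

theorem stmt8_general (m : ℕ) (hm : 2 ≤ m) (a : ℝ)
    (qm : ℝ) (hqm : qm ∈ Set.Ioo (0 : ℝ) 1)
    (x₁ μ : ℝ)
    (hx₁ : x₁ = (qm ^ (-(1 : ℝ) / ((m : ℝ) - 1)) - 1) /
      (qm ^ (-(1 : ℝ) / ((m : ℝ) - 1)) - qm))
    (hμ : μ = (1 - qm) / (1 - x₁)) :
    IsStationaryDD m a qm (fun i => qm * x₁ * (1 + μ * x₁) ^ (m - i)) ∧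
      1 = qm * (1 + (1 - qm) * x₁ / (1 - x₁)) ^ (m - 1) := by
  obtain ⟨hq0, hq1⟩ := hqm
  set r := qm ^ (-(1 : ℝ) / ((m : ℝ) - 1))
  have hcast : (m : ℝ) - 1 = ((m - 1 : ℕ) : ℝ) := by
    rw [Nat.cast_sub (by omega), Nat.cast_one]
  have hfirst : qm * r ^ (m - 1) = 1 := by
    have := Real.rpow_neg_one_div_natCast_pow hq0 (n := m - 1) (by omega)
    rw [← hcast] at this
    rw [this, mul_inv_cancel₀ hq0.ne']
  have hr : 1 < r := Real.one_lt_rpow_of_pos_of_lt_one_of_neg hq0 hq1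
    (div_neg_of_neg_of_pos (by norm_num) (by rw [hcast]; exact_mod_cast (by omega : 0 < m - 1)))
  have hratio : 1 + μ * x₁ = r := by
    rw [hμ, hx₁]
    exact one_add_one_sub_div_one_sub_mul_sub_one_div_sub hq1 hr
  obtain ⟨hx0, hx1⟩ : x₁ ∈ Set.Ico 0 1 := hx₁ ▸ sub_one_div_sub_mem_Ico hq1 hr
  refine ⟨?_, ?_⟩
  · rw [hratio]
    exact isStationaryDD_geometric a hq0.le (by linarith) hx0 hx1 hfirst (hμ ▸ hratio)
      (hx₁ ▸ mul_sub_one_div_sub_mul_geom_sum (by omega) hq1 hr hfirst)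
  · rw [mul_div_right_comm, ← hμ, hratio, hfirst]

/-- For `q_m ∈ (0,1)`, the explicit truncated power law
`x_i = q_m x₁ (1 + μ x₁)^{m−i}` with
`x₁ = (q_m^{−1/(m−1)} − 1)/(q_m^{−1/(m−1)} − q_m)` and `μ = (1−q_m)/(1−x₁)`
is a stationary solution of the density-dependent model, and `x₁` satisfies
`1 = q_m (1 + (1−q_m)x₁/(1−x₁))^{m−1}`. -/
theorem stmt8 (m : ℕ) (hm : 2 ≤ m) (a : ℝ) (ha : a ∈ Set.Ioo (0 : ℝ) 1)
    (qm : ℝ) (hqm : qm ∈ Set.Ioo (0 : ℝ) 1)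
    (x₁ μ : ℝ)
    (hx₁ : x₁ = (qm ^ (-(1 : ℝ) / ((m : ℝ) - 1)) - 1) /
      (qm ^ (-(1 : ℝ) / ((m : ℝ) - 1)) - qm))
    (hμ : μ = (1 - qm) / (1 - x₁)) :
    IsStationaryDD m a qm (fun i => qm * x₁ * (1 + μ * x₁) ^ (m - i)) ∧
      1 = qm * (1 + (1 - qm) * x₁ / (1 - x₁)) ^ (m - 1) :=
  stmt8_general m hm a qm hqm x₁ μ hx₁ hμ
end

section
/- Every stationary solution x of the density-dependent model satisfies, with μ = (1−q_m)/(1−x_1), the identity x_i = q_m x_1 (1 + μ x_1)^{m−i} for all 1 ≤ i ≤ m, and moreover x_1 > 0 and 1 = q_m (1 + μ x_1)^{m−1}. -/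
/-- Every stationary solution `x` of the density-dependent model satisfies,
with `μ = (1−q_m)/(1−x₁)`, `x_i = q_m x₁ (1 + μ x₁)^{m−i}` for `1 ≤ i ≤ m`,
and moreover `x₁ > 0` and `1 = q_m (1 + μ x₁)^{m−1}`. -/
theorem stmt11 (m : ℕ) (hm : 2 ≤ m) (a : ℝ) (ha : a ∈ Set.Ioo (0 : ℝ) 1)
    (qm : ℝ) (hqm : qm ∈ Set.Icc (0 : ℝ) 1)
    (x : ℕ → ℝ) (hx : IsStationaryDD m a qm x)
    (μ : ℝ) (hμ : μ = (1 - qm) / (1 - x 1)) :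
    (∀ i, 1 ≤ i → i ≤ m → x i = qm * x 1 * (1 + μ * x 1) ^ (m - i)) ∧
      0 < x 1 ∧ 1 = qm * (1 + μ * x 1) ^ (m - 1) := by
  obtain ⟨hpos, hsum, hlt, heqm, hrec⟩ := hx
  obtain ⟨ha0, ha1⟩ := ha
  have hane : (1 : ℝ) - a ≠ 0 := by linarith
  -- x m = qm * x 1
  have hxm : x m = qm * x 1 := by
    have : (1 - a) * x m = (1 - a) * (qm * x 1) := by linarith
    exact mul_left_cancel₀ hane this
  -- step relation
  have hstep : ∀ i, 1 ≤ i → i ≤ m - 1 → x i = x (i + 1) * (1 + μ * x 1) := by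
    intro i h1 h2
    have h := hrec i h1 h2
    rw [← hμ] at h
    have : (1 - a) * x i = (1 - a) * (x (i + 1) * (1 + μ * x 1)) := by linear_combination h
    exact mul_left_cancel₀ hane this
  -- downward formula
  have key : ∀ k, k ≤ m - 1 → x (m - k) = qm * x 1 * (1 + μ * x 1) ^ k := by
    intro k
    induction k with
    | zero => intro _; simpa using hxm
    | succ n ih =>
      intro hk
      have hn : n ≤ m - 1 := by omega
      have h1 : 1 ≤ m - (n + 1) := by omega
      have h2 : m - (n + 1) ≤ m - 1 := by omega
      have h3 : m - (n + 1) + 1 = m - n := by omega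
      have := hstep (m - (n + 1)) h1 h2
      rw [h3, ih hn] at this
      rw [this]; ring
  have main : ∀ i, 1 ≤ i → i ≤ m → x i = qm * x 1 * (1 + μ * x 1) ^ (m - i) := by
    intro i h1 h2
    have hk : m - i ≤ m - 1 := by omega
    have := key (m - i) hk
    rwa [show m - (m - i) = i by omega] at this
  refine ⟨main, ?_, ?_⟩
  · rcases lt_or_eq_of_le (hpos 1 le_rfl (by omega)) with h | h
    · exact h
    · exfalso
      have : ∑ i ∈ Finset.Icc 1 m, x i = 0 := by
        apply Finset.sum_eq_zero
        intro i hi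
        simp only [Finset.mem_Icc] at hi
        rw [main i hi.1 hi.2, ← h]; ring
      linarith [hsum]
  · have hx1 : x 1 ≠ 0 := by
      intro h0
      have : ∑ i ∈ Finset.Icc 1 m, x i = 0 := by
        apply Finset.sum_eq_zero
        intro i hi
        simp only [Finset.mem_Icc] at hi
        rw [main i hi.1 hi.2, h0]; ring
      linarith [hsum]
    have h1 := main 1 le_rfl (by omega)
    have : x 1 * 1 = x 1 * (qm * (1 + μ * x 1) ^ (m - 1)) := by
      linear_combination h1
    have := mul_left_cancel₀ hx1 this
    linarith [this]
end

section
/- If q_m = 0, then there exists no stationary solution of the density-dependent model. -/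
/-- If `q_m = 0` (no leapfrogging), the density-dependent model has no
stationary solution. -/
theorem stmt12 (m : ℕ) (hm : 2 ≤ m) (a : ℝ) (ha : a ∈ Set.Ioo (0 : ℝ) 1) :
    ¬ ∃ x : ℕ → ℝ, IsStationaryDD m a 0 x := by
  rintro ⟨x, hnn, hsum, hlt, hm0, hrec⟩
  have ha1 : a < 1 := ha.2
  have hxm : x m = 0 := by
    have h : (1 - a) * x m = 0 := by linarith
    rcases mul_eq_zero.mp h with h' | h'
    · linarith
    · exact h'
  have key : ∀ j, j ≤ m - 1 → x (m - j) = 0 := by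
    intro j
    induction j with
    | zero => intro _; simpa using hxm
    | succ k ih =>
      intro hk
      have hk' : k ≤ m - 1 := by omega
      have hxs : x (m - (k + 1) + 1) = 0 := by
        have : m - (k + 1) + 1 = m - k := by omega
        rw [this]; exact ih hk'
      have h1 : 1 ≤ m - (k + 1) := by omega
      have h2 : m - (k + 1) ≤ m - 1 := by omega
      have := hrec (m - (k + 1)) h1 h2
      rw [hxs] at this
      have h : (1 - a) * x (m - (k + 1)) = 0 := by linarith
      rcases mul_eq_zero.mp h with h' | h'
      · linarith
      · exact h'
  have hall : ∀ i ∈ Finset.Icc 1 m, x i = 0 := by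
    intro i hi
    simp only [Finset.mem_Icc] at hi
    have h1 : m - (m - i) = i := by omega
    have h2 : m - i ≤ m - 1 := by omega
    have := key (m - i) h2
    rwa [h1] at this
  rw [Finset.sum_congr rfl hall] at hsum
  simp at hsum
end

section
/- Let m ≥ 2 be an integer. For q ∈ (0,1) define x_1(q) = (q^{−1/(m−1)} − 1)/(q^{−1/(m−1)} − q), μ(q) = (1−q)/(1−x_1(q)), and x_i(q) = q · x_1(q) · (1 + μ(q) x_1(q))^{m−i} for 1 ≤ i ≤ m. Then, as q → 1 from the left within (0,1), μ(q) → 0 and x_i(q) → 1/m for every 1 ≤ i ≤ m; i.e., as the leapfrogging intensity tends to 1 the stationary distribution tends to the uniform distribution. -/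
open Filter Real in
/-- As the leapfrogging intensity `q → 1⁻` within `(0,1)`, the imitation
intensity `μ(q) → 0` and the stationary distribution
`x_i(q) = q x₁(q) (1 + μ(q) x₁(q))^{m−i}` tends to the uniform distribution
`1/m`, where `x₁(q) = (q^{−1/(m−1)} − 1)/(q^{−1/(m−1)} − q)` and
`μ(q) = (1−q)/(1−x₁(q))`. -/
theorem stmt13 (m : ℕ) (hm : 2 ≤ m)
    (x₁ μ : ℝ → ℝ)
    (hx₁ : ∀ q : ℝ, x₁ q = (q ^ (-(1 : ℝ) / ((m : ℝ) - 1)) - 1) /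
      (q ^ (-(1 : ℝ) / ((m : ℝ) - 1)) - q))
    (hμ : ∀ q : ℝ, μ q = (1 - q) / (1 - x₁ q)) :
    Filter.Tendsto μ (nhdsWithin 1 (Set.Ioo (0 : ℝ) 1)) (nhds 0) ∧
      ∀ i, 1 ≤ i → i ≤ m →
        Filter.Tendsto (fun q : ℝ => q * x₁ q * (1 + μ q * x₁ q) ^ (m - i))
          (nhdsWithin 1 (Set.Ioo (0 : ℝ) 1)) (nhds (1 / (m : ℝ))) := by
  have hm1 : (1:ℝ) ≤ (m:ℝ) - 1 := by
    have : (2:ℝ) ≤ (m:ℝ) := by exact_mod_cast hm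
    linarith
  have hm1' : ((m:ℝ) - 1) ≠ 0 := by linarith
  set e : ℝ := 1 / ((m:ℝ) - 1) with he
  have he_pos : 0 < e := by
    rw [he]; positivity
  set l := nhdsWithin (1:ℝ) (Set.Ioo (0:ℝ) 1) with hl
  -- key algebraic identity
  have key : ∀ q ∈ Set.Ioo (0:ℝ) 1,
      x₁ q = (∑ k ∈ Finset.range m, (q ^ e) ^ k)⁻¹ := by
    intro q hq
    obtain ⟨hq0, hq1⟩ := hq
    set u : ℝ := q ^ e with hu
    have hu0 : 0 < u := Real.rpow_pos_of_pos hq0 e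
    have hu1 : u < 1 := Real.rpow_lt_one hq0.le hq1 he_pos
    have hpow : u ^ (m-1) = q := by
      rw [hu, ← Real.rpow_natCast (q ^ e) (m-1), ← Real.rpow_mul hq0.le]
      have hc : (↑(m-1) : ℝ) = (m:ℝ) - 1 := by
        have := Nat.cast_sub (by omega : 1 ≤ m) (R := ℝ)
        simpa using this
      rw [hc, he]
      rw [one_div, inv_mul_cancel₀ hm1', Real.rpow_one]
    have hneg : q ^ (-(1:ℝ) / ((m:ℝ)-1)) = u⁻¹ := by
      rw [neg_div, ← he, Real.rpow_neg hq0.le]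
    have hum : u ^ m < 1 := pow_lt_one₀ hu0.le hu1 (by omega)
    have hsum : ∑ k ∈ Finset.range m, u ^ k = (u ^ m - 1)/(u - 1) :=
      geom_sum_eq (ne_of_lt hu1) m
    rw [hx₁, hneg, ← hpow, hsum]
    have h1 : u ≠ 0 := hu0.ne'
    have h2 : u - 1 ≠ 0 := by linarith
    have h3 : u ^ m - 1 ≠ 0 := by linarith
    have hmm : u ^ (m-1) * u = u ^ m := by
      rw [← pow_succ]; congr 1; omega
    have hden : u⁻¹ - u ^ (m-1) ≠ 0 := by
      have h4 : u ^ (m-1) ≤ 1 := pow_le_one₀ hu0.le hu1.le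
      have h5 : 1 < u⁻¹ := (one_lt_inv₀ hu0).2 hu1
      linarith
    rw [inv_div, div_eq_div_iff hden h3]
    have hiu : u⁻¹ * u ^ m = u ^ (m-1) := by
      rw [← hmm]; field_simp
    have hexp : (u⁻¹ - 1) * (u ^ m - 1) = u⁻¹ * u ^ m - u⁻¹ - u ^ m + 1 := by ring
    have hexp2 : (u - 1) * (u⁻¹ - u ^ (m-1)) = u * u⁻¹ - u * u^(m-1) - u⁻¹ + u ^ (m-1) := by ring
    rw [hexp, hexp2, hiu, mul_inv_cancel₀ h1, mul_comm u (u^(m-1)), hmm]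
    ring
  have hmne : (m:ℝ) ≠ 0 := by positivity
  have hu_tend : Filter.Tendsto (fun q : ℝ => q ^ e) l (nhds 1) := by
    have h := (Real.continuousAt_rpow_const 1 e (Or.inl one_ne_zero)).tendsto
    rw [Real.one_rpow] at h
    exact h.mono_left nhdsWithin_le_nhds
  have hx₁_tend : Filter.Tendsto x₁ l (nhds (1 / (m:ℝ))) := by
    have hS : Filter.Tendsto (fun q : ℝ => ∑ k ∈ Finset.range m, (q ^ e) ^ k) l
        (nhds (∑ k ∈ Finset.range m, (1:ℝ) ^ k)) :=
      tendsto_finset_sum _ (fun k _ => hu_tend.pow k)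
    simp only [one_pow, Finset.sum_const, Finset.card_range, nsmul_eq_mul, mul_one] at hS
    have hSi := hS.inv₀ hmne
    rw [← one_div] at hSi
    refine hSi.congr' ?_
    exact Filter.eventually_of_mem self_mem_nhdsWithin (fun q hq => (key q hq).symm)
  have hq_tend : Filter.Tendsto (fun q : ℝ => q) l (nhds 1) :=
    tendsto_id.mono_left nhdsWithin_le_nhds
  have hμ_tend : Filter.Tendsto μ l (nhds 0) := by
    have hnum : Filter.Tendsto (fun q : ℝ => 1 - q) l (nhds 0) := by
      have h := (tendsto_const_nhds (x := (1:ℝ))).sub hq_tend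
      simpa using h
    have hden : Filter.Tendsto (fun q : ℝ => 1 - x₁ q) l (nhds (1 - 1/(m:ℝ))) :=
      (tendsto_const_nhds (x := (1:ℝ))).sub hx₁_tend
    have hne : (1 : ℝ) - 1/(m:ℝ) ≠ 0 := by
      have h2 : (2:ℝ) ≤ (m:ℝ) := by exact_mod_cast hm
      have : 1/(m:ℝ) ≤ 1/2 := by
        apply one_div_le_one_div_of_le <;> linarith
      linarith
    have h := hnum.div hden hne
    rw [zero_div] at h
    exact h.congr (fun q => (hμ q).symm)
  refine ⟨hμ_tend, fun i _ _ => ?_⟩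
  have hb : Filter.Tendsto (fun q : ℝ => 1 + μ q * x₁ q) l (nhds 1) := by
    have h := (tendsto_const_nhds (x := (1:ℝ))).add (hμ_tend.mul hx₁_tend)
    simpa using h
  have h := (hq_tend.mul hx₁_tend).mul (hb.pow (m - i))
  simpa using h
end
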